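/- Let v = T + iT³ ∈ ℂ(T, σ). Then φ(ℂ(v)) is not σ-invariant, i.e., σ(φ(ℂ(v))) ≠ φ(ℂ(v)). -/

import Mathlib

noncomputable section

/-- The quaternion `j`. -/
def qj : Quaternion ℝ := ⟨0, 0, 1, 0⟩

/-- The quaternion `k`. -/
def qk : Quaternion ℝ := ⟨0, 0, 0, 1⟩

/-- The identification of `ℂ` with the subring `ℝ ⊕ ℝi` of Hamilton's quaternions. -/
def qc (a : ℂ) : Quaternion ℝ := ⟨a.re, a.im, 0, 0⟩

/-- The automorphism `σ` of `ℍ`: `a + bi + cj + dk ↦ a - bi + cj - dk`. -/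
def qsigma (q : Quaternion ℝ) : Quaternion ℝ := ⟨q.re, -q.imI, q.imJ, -q.imK⟩

variable {M : Type*} [DivisionRing M]

/- `ℍ(X)`, the quotient division ring of the polynomial ring `ℍ[X]` in a central
variable `X`, is axiomatized as a division ring `M` together with an injective ring
homomorphism `κ : ℍ[X] →+* M` such that every element of `M` is `κ p * (κ q)⁻¹`.
The injective ring homomorphism `φ : ℂ(T, σ) → ℍ(X)` (extending
`Σ aᵢTⁱ ↦ Σ aᵢjⁱXⁱ`, where `σ` is complex conjugation) identifies `ℂ(T, σ)` with
the division subring of `M` generated by `ℂ` and `jX`; under this identification,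
`φ(T) = jX` and a division ring `L` with `ℂ ⊆ L ⊆ ℂ(T, σ)` corresponds to its image
`φ(L)`, a division subring of `M` squeezed between `ℂ` and `φ(ℂ(T, σ)) = ℂ(jX)`. -/

/-- The image of `ℂ` in `M = ℍ(X)`. -/
def complexSet (κ : Polynomial (Quaternion ℝ) →+* M) : Set M :=
  Set.range fun a : ℂ => κ (Polynomial.C (qc a))

/-- The element `j` of `M = ℍ(X)`. -/
def jElem (κ : Polynomial (Quaternion ℝ) →+* M) : M := κ (Polynomial.C qj)

/-- The element `jX = φ(T)` of `M = ℍ(X)`. -/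
def jXElem (κ : Polynomial (Quaternion ℝ) →+* M) : M :=
  κ (Polynomial.C qj * Polynomial.X)

/-- `φ(ℂ(T, σ))`: the smallest division subring of `M = ℍ(X)` containing `ℂ` and
`jX`, i.e. the image of `ℂ(T, σ)` under the embedding `φ`. -/
def phiImage (κ : Polynomial (Quaternion ℝ) →+* M) : Subfield M :=
  Subfield.closure (complexSet κ ∪ {jXElem κ})

/-- `s : M →+* M` is the extension to `M = ℍ(X)` of the order-2 automorphism `σ` of
`ℍ` (`a + bi + cj + dk ↦ a - bi + cj - dk`), acting coefficientwise on `ℍ[X]`. -/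
def IsSigmaExtension (κ : Polynomial (Quaternion ℝ) →+* M) (s : M →+* M) : Prop :=
  ∀ p : Polynomial (Quaternion ℝ),
    s (κ p) = κ (p.sum fun n q => Polynomial.C (qsigma q) * Polynomial.X ^ n)

/-- `φ(v)` for `v = T + iT³ ∈ ℂ(T, σ)`: one has
`φ(v) = jX + i j³ X³ = jX - kX³` in `ℍ(X)`. -/
def phiV (κ : Polynomial (Quaternion ℝ) →+* M) : M :=
  κ (Polynomial.C qj * Polynomial.X - Polynomial.C qk * Polynomial.X ^ 3)

/-!
Let `θ : ℂ[X] → ℍ(X)` be the inclusion and `u = jX`. Then `u θ(f) = θ(f̄) u`, and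
`φ(v) = jX - kX³ = θ(g) u` with `g = 1 - iX²`; hence `φ(v) θ(f) = θ(f̄) φ(v)` and
`φ(v)² = θ(c)` with `c = -(X² + X⁶)`, a real polynomial. Let `K ⊆ ℍ(X)` be the commutative
subfield of fractions of polynomials in `θ(c)`. Then `D = K + K φ(v)` is a ring which is
2-dimensional as a left `K`-space, hence a division ring, so `φ(ℂ(v)) ⊆ D`.
If `φ(ℂ(v))` were `σ`-invariant it would contain `(φ(v) + σ(φ(v)))/2 = u`. But `u ∉ D`: in
`u = a + b φ(v)`, conjugation by `i` fixes `a, b ∈ K` and negates `u` and `φ(v)`, so `a = 0`;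
then `b = θ(g)⁻¹`, putting `g` in `ℂ(c)`, which is impossible since `deg g = 2` is not a
multiple of `deg c = 6`.
-/

open Polynomial ComplexConjugate
open scoped Quaternion

namespace Subfield

theorem inv_mem_of_finiteDimensional {K : Subfield M} (D : Submodule K M)
    [FiniteDimensional K D] (one_mem : (1 : M) ∈ D) (mul_mem : ∀ x ∈ D, ∀ y ∈ D, x * y ∈ D)
    {x : M} (hx : x ∈ D) : x⁻¹ ∈ D := by
  rcases eq_or_ne x 0 with rfl | hx0
  · simp
  let mulRight : D →ₗ[K] D :=
    { toFun := fun y => ⟨y * x, mul_mem _ y.2 _ hx⟩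
      map_add' := fun y z => Subtype.ext (add_mul _ _ _)
      map_smul' := fun a y => Subtype.ext (mul_assoc _ _ _) }
  have hinj : Function.Injective mulRight := fun y z h =>
    Subtype.ext (mul_right_cancel₀ hx0 (congrArg Subtype.val h))
  obtain ⟨y, hy⟩ := LinearMap.injective_iff_surjective.mp hinj ⟨1, one_mem⟩
  rw [← eq_inv_of_mul_eq_one_left (congrArg Subtype.val hy)]
  exact y.2

variable {K : Subfield M} {v : M}

theorem mem_span_one_pair {x : M} :
    x ∈ Submodule.span K {1, v} ↔ ∃ a ∈ K, ∃ b ∈ K, x = a + b * v := by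
  simp only [Submodule.mem_span_pair, Subfield.smul_def, smul_eq_mul, mul_one]
  constructor
  · rintro ⟨a, b, rfl⟩
    exact ⟨a, a.2, b, b.2, rfl⟩
  · rintro ⟨a, ha, b, hb, rfl⟩
    exact ⟨⟨a, ha⟩, ⟨b, hb⟩, rfl⟩

theorem mul_mem_span_one_pair (hv : ∀ a ∈ K, ∃ b ∈ K, v * a = b * v) (hvv : v * v ∈ K)
    {x y : M} (hx : x ∈ Submodule.span K {1, v}) (hy : y ∈ Submodule.span K {1, v}) :
    x * y ∈ Submodule.span K {1, v} := by
  obtain ⟨a, ha, b, hb, rfl⟩ := mem_span_one_pair.mp hx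
  obtain ⟨a', ha', b', hb', rfl⟩ := mem_span_one_pair.mp hy
  obtain ⟨c, hc, hva'⟩ := hv a' ha'
  obtain ⟨d, hd, hvb'⟩ := hv b' hb'
  refine mem_span_one_pair.mpr ⟨a * a' + b * d * (v * v), ?_, a * b' + b * c, ?_, ?_⟩
  · exact add_mem (mul_mem ha ha') (mul_mem (mul_mem hb hd) hvv)
  · exact add_mem (mul_mem ha hb') (mul_mem hb hc)
  · calc (a + b * v) * (a' + b' * v)
        = a * a' + a * b' * v + b * (v * a') + b * (v * b') * v := by noncomm_ring
      _ = _ := by rw [hva', hvb']; noncomm_ring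

variable (K v) in
/-- `K + K v` is a division ring: it is closed under multiplication and finite-dimensional over
`K`. -/
def adjoinSkewSqrt (hv : ∀ a ∈ K, ∃ b ∈ K, v * a = b * v) (hvv : v * v ∈ K) : Subfield M where
  carrier := Submodule.span K {1, v}
  mul_mem' := mul_mem_span_one_pair hv hvv
  one_mem' := Submodule.subset_span (Set.mem_insert _ _)
  add_mem' := add_mem
  zero_mem' := zero_mem _
  neg_mem' := neg_mem
  inv_mem' := by
    have : FiniteDimensional K (Submodule.span K {1, v}) :=
      FiniteDimensional.span_of_finite K (Set.toFinite _)
    exact fun x hx => inv_mem_of_finiteDimensional _ (Submodule.subset_span (Set.mem_insert _ _))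
      (fun _ hx _ hy => mul_mem_span_one_pair hv hvv hx hy) hx

variable {hv : ∀ a ∈ K, ∃ b ∈ K, v * a = b * v} {hvv : v * v ∈ K}

theorem mem_adjoinSkewSqrt {x : M} :
    x ∈ adjoinSkewSqrt K v hv hvv ↔ ∃ a ∈ K, ∃ b ∈ K, x = a + b * v :=
  mem_span_one_pair

theorem le_adjoinSkewSqrt : K ≤ adjoinSkewSqrt K v hv hvv := fun a ha =>
  mem_adjoinSkewSqrt.mpr ⟨a, ha, 0, K.zero_mem, by rw [zero_mul, add_zero]⟩

theorem mem_adjoinSkewSqrt_self : v ∈ adjoinSkewSqrt K v hv hvv :=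
  mem_adjoinSkewSqrt.mpr ⟨0, K.zero_mem, 1, K.one_mem, by rw [one_mul, zero_add]⟩

def twistedCentralizer (s : M →+* M) (v : M) : Subfield M where
  carrier := {a | v * a = s a * v}
  mul_mem' {a b} ha hb := by
    simp only [Set.mem_ofPred_eq, map_mul] at *
    rw [← mul_assoc, ha, mul_assoc, hb, mul_assoc]
  one_mem' := by simp
  add_mem' ha hb := by simp_all [mul_add, add_mul]
  zero_mem' := by simp
  neg_mem' ha := by simp_all
  inv_mem' a ha := by
    rcases eq_or_ne a 0 with rfl | ha0
    · simp
    have hsa : s a ≠ 0 := (map_ne_zero s).mpr ha0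
    simp only [Set.mem_ofPred_eq, map_inv₀] at *
    rw [eq_inv_mul_iff_mul_eq₀ hsa, ← mul_assoc, ← ha, mul_assoc, mul_inv_cancel₀ ha0, mul_one]

end Subfield

namespace RingHom

variable {R : Type*} [CommRing R] (e : R →+* M)

/-- The fractions `e p / e q`: the image of the fraction field of `R` when `e` is injective. -/
def fractionSubfield : Subfield M where
  carrier := {x | ∃ p q, e q ≠ 0 ∧ x = e p / e q}
  mul_mem' := by
    rintro _ _ ⟨p, q, hq, rfl⟩ ⟨p', q', hq', rfl⟩
    refine ⟨p * p', q * q', by rw [map_mul]; exact mul_ne_zero hq hq', ?_⟩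
    rw [map_mul, map_mul, ((Commute.all q q').map e).div_mul_div_comm
      ((Commute.all q p').map e).inv_left₀]
  one_mem' := ⟨1, 1, by simp, by simp⟩
  add_mem' := by
    rintro _ _ ⟨p, q, hq, rfl⟩ ⟨p', q', hq', rfl⟩
    refine ⟨p * q' + q * p', q * q', by rw [map_mul]; exact mul_ne_zero hq hq', ?_⟩
    rw [((Commute.all q p').map e).div_add_div ((Commute.all q q').map e) hq hq']
    simp
  zero_mem' := ⟨0, 1, by simp, by simp⟩
  neg_mem' := by
    rintro _ ⟨p, q, hq, rfl⟩
    exact ⟨-p, q, hq, by rw [map_neg, neg_div]⟩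
  inv_mem' := by
    rintro _ ⟨p, q, hq, rfl⟩
    rcases eq_or_ne (e p) 0 with hp | hp
    · exact ⟨0, 1, by simp, by simp [hp]⟩
    · exact ⟨q, p, hp, inv_div _ _⟩

variable {e}

theorem apply_mem_fractionSubfield (r : R) : e r ∈ e.fractionSubfield :=
  ⟨r, 1, by simp, by simp⟩

theorem fractionSubfield_le {S : Subfield M} (h : ∀ r, e r ∈ S) : e.fractionSubfield ≤ S := by
  rintro _ ⟨p, q, -, rfl⟩
  exact div_mem (h p) (h q)

end RingHom

theorem Polynomial.C_mul_map_eq_map_mul_C {R S : Type*} [Semiring R] [Semiring S]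
    {φ ψ : R →+* S} {x : S} (h : ∀ a, x * φ a = ψ a * x) (p : R[X]) :
    C x * p.map φ = p.map ψ * C x := by
  ext n
  simp [coeff_C_mul, coeff_mul_C, h]

theorem Polynomial.sum_C_apply_mul_X_pow_eq_map {R S : Type*} [Semiring R] [Semiring S]
    (φ : R →+* S) (p : R[X]) : (p.sum fun n a => C (φ a) * X ^ n) = p.map φ := by
  rw [Polynomial.map, eval₂_eq_sum]; rfl

def qcHom : ℂ →+* ℍ[ℝ] where
  toFun := qc
  map_one' := by ext <;> simp [qc]
  map_mul' a b := by
    ext <;> simp only [Quaternion.re_mul, Quaternion.imI_mul, Quaternion.imJ_mul,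
      Quaternion.imK_mul] <;> simp [qc]
  map_zero' := by ext <;> simp [qc]
  map_add' a b := by
    ext <;> simp only [Quaternion.re_add, Quaternion.imI_add, Quaternion.imJ_add,
      Quaternion.imK_add] <;> simp [qc]

def qsigmaHom : ℍ[ℝ] →+* ℍ[ℝ] where
  toFun := qsigma
  map_one' := by ext <;> simp [qsigma]
  map_mul' a b := by
    ext <;> simp only [Quaternion.re_mul, Quaternion.imI_mul, Quaternion.imJ_mul,
      Quaternion.imK_mul] <;> simp [qsigma] <;> ring
  map_zero' := by ext <;> simp [qsigma]
  map_add' a b := by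
    ext <;> simp only [Quaternion.re_add, Quaternion.imI_add, Quaternion.imJ_add,
      Quaternion.imK_add] <;> simp [qsigma] <;> ring

theorem qsigmaHom_comp_qcHom : qsigmaHom.comp qcHom = qcHom.comp (starRingEnd ℂ) := by
  ext a <;> simp [qsigmaHom, qcHom, qsigma, qc]

theorem qsigma_qj : qsigma qj = qj := by ext <;> simp [qsigma, qj]

theorem qj_mul_qc (a : ℂ) : qj * qc a = qc (conj a) * qj := by
  ext <;> simp only [Quaternion.re_mul, Quaternion.imI_mul, Quaternion.imJ_mul,
    Quaternion.imK_mul] <;> simp [qj, qc]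

theorem qj_mul_qj : qj * qj = -1 := by
  ext <;> simp only [Quaternion.re_mul, Quaternion.imI_mul, Quaternion.imJ_mul,
    Quaternion.imK_mul] <;> simp [qj]

theorem qcHom_I_mul_qj : qcHom Complex.I * qj = qk := by
  ext <;> simp only [Quaternion.re_mul, Quaternion.imI_mul, Quaternion.imJ_mul,
    Quaternion.imK_mul] <;> simp [qcHom, qj, qk, qc]

/-- `φ(v) = θ(vFactor) · jX`. -/
def vFactor : ℂ[X] := 1 - C Complex.I * X ^ 2

/-- `φ(v)² = θ(vSq)`. -/
def vSq : ℂ[X] := -(X ^ 2 + X ^ 6)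

theorem vFactor_map_conj : vFactor.map conj = 1 + C Complex.I * X ^ 2 := by
  simp [vFactor]

theorem vSq_map_conj : vSq.map conj = vSq := by
  simp [vSq]

theorem vFactor_mul_map_conj_mul_neg_X_sq : vFactor * vFactor.map conj * -X ^ 2 = vSq := by
  have hI : (C Complex.I) ^ 2 = (-1 : ℂ[X]) := by rw [← C_pow, Complex.I_sq, C_neg, C_1]
  rw [vFactor_map_conj, vFactor, vSq]
  linear_combination (X : ℂ[X]) ^ 6 * hI

theorem natDegree_vSq : vSq.natDegree = 6 := by
  rw [vSq, natDegree_neg]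
  compute_degree!

theorem natDegree_vFactor : vFactor.natDegree = 2 := by
  rw [vFactor]
  compute_degree!

theorem vFactor_mul_comp_vSq_ne {p q : ℂ[X]} (hq : q ≠ 0) :
    vFactor * q.comp vSq ≠ p.comp vSq := by
  intro h
  have hvSq : vSq ≠ C (vSq.coeff 0) := fun h => by
    have := natDegree_vSq
    rw [h, natDegree_C] at this
    omega
  have hq' : q.comp vSq ≠ 0 := fun h0 => by
    rcases comp_eq_zero_iff.mp h0 with h0 | ⟨-, h0⟩
    exacts [hq h0, hvSq h0]
  have hvFactor : vFactor ≠ 0 := fun h0 => by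
    have := natDegree_vFactor
    rw [h0, natDegree_zero] at this
    omega
  have := congrArg natDegree h
  rw [natDegree_mul hvFactor hq', natDegree_comp, natDegree_comp, natDegree_vFactor,
    natDegree_vSq] at this
  omega

section Embedding

variable (κ : Polynomial (Quaternion ℝ) →+* M)

/-- The inclusion `θ : ℂ[X] → ℍ(X)`. -/
def complexPolyHom : ℂ[X] →+* M := κ.comp (mapRingHom qcHom)

theorem complexPolyHom_apply (f : ℂ[X]) : complexPolyHom κ f = κ (f.map qcHom) := rfl

theorem complexPolyHom_C (z : ℂ) : complexPolyHom κ (C z) = κ (C (qc z)) := by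
  rw [complexPolyHom_apply, map_C]
  rfl

variable {κ} in
theorem complexPolyHom_injective (hinj : Function.Injective κ) :
    Function.Injective (complexPolyHom κ) :=
  hinj.comp (map_injective qcHom qcHom.injective)

variable {κ} in
theorem charZero_of_injective (hinj : Function.Injective κ) : CharZero M :=
  (RingHom.charZero_iff (complexPolyHom_injective hinj)).mp inferInstance

theorem jXElem_mul_complexPolyHom (f : ℂ[X]) :
    jXElem κ * complexPolyHom κ f = complexPolyHom κ (f.map conj) * jXElem κ := by
  have hj : C qj * f.map qcHom = (f.map conj).map qcHom * C qj := by
    rw [Polynomial.map_map]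
    exact C_mul_map_eq_map_mul_C qj_mul_qc f
  simp only [jXElem, complexPolyHom_apply, ← map_mul]
  conv_lhs => rw [mul_assoc, X_mul, ← mul_assoc, hj, mul_assoc]

theorem jXElem_mul_jXElem : jXElem κ * jXElem κ = complexPolyHom κ (-X ^ 2) := by
  simp only [jXElem, complexPolyHom_apply, ← map_mul]
  congr 1
  conv_lhs => rw [mul_assoc, ← mul_assoc X, X_mul, mul_assoc, ← mul_assoc, ← C_mul, qj_mul_qj]
  simp [sq]

variable {κ} in
theorem jXElem_ne_zero (hinj : Function.Injective κ) : jXElem κ ≠ 0 := by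
  intro h
  have := jXElem_mul_jXElem κ
  rw [h, zero_mul, eq_comm, map_eq_zero_iff _ (complexPolyHom_injective hinj)] at this
  exact neg_ne_zero.mpr (pow_ne_zero 2 X_ne_zero) this

theorem phiV_eq : phiV κ = complexPolyHom κ vFactor * jXElem κ := by
  simp only [phiV, jXElem, complexPolyHom_apply, ← map_mul, vFactor]
  congr 1
  simp only [Polynomial.map_sub, Polynomial.map_one, Polynomial.map_mul, map_C,
    Polynomial.map_pow, map_X]
  rw [sub_mul, one_mul, mul_assoc, X_pow_mul, ← mul_assoc, ← mul_assoc, ← C_mul, qcHom_I_mul_qj,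
    mul_assoc, ← pow_succ']

theorem phiV_mul_complexPolyHom (f : ℂ[X]) :
    phiV κ * complexPolyHom κ f = complexPolyHom κ (f.map conj) * phiV κ := by
  rw [phiV_eq, mul_assoc, jXElem_mul_complexPolyHom, ← mul_assoc, ← map_mul, mul_comm,
    map_mul, mul_assoc]

theorem phiV_mul_phiV : phiV κ * phiV κ = complexPolyHom κ vSq := by
  rw [phiV_eq, mul_assoc, ← mul_assoc (jXElem κ), jXElem_mul_complexPolyHom, mul_assoc,
    jXElem_mul_jXElem, ← mul_assoc, ← map_mul, ← map_mul, vFactor_mul_map_conj_mul_neg_X_sq]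

/-- `f ↦ f(φ(v)²)`, coefficients on the left. -/
def evalPhiVSq : ℂ[X] →+* M := (complexPolyHom κ).comp (compRingHom vSq)

theorem evalPhiVSq_apply (f : ℂ[X]) : evalPhiVSq κ f = complexPolyHom κ (f.comp vSq) := rfl

/-- `ℂ(φ(v)²)`. -/
def vSqSubfield : Subfield M := (evalPhiVSq κ).fractionSubfield

theorem complexPolyHom_C_mem_vSqSubfield (z : ℂ) : complexPolyHom κ (C z) ∈ vSqSubfield κ := by
  rw [← C_comp (p := vSq)]
  exact RingHom.apply_mem_fractionSubfield (C z)

theorem phiV_mul_phiV_mem_vSqSubfield : phiV κ * phiV κ ∈ vSqSubfield κ := by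
  rw [phiV_mul_phiV, ← X_comp (p := vSq)]
  exact RingHom.apply_mem_fractionSubfield X

theorem vSqSubfield_le_centralizer_I :
    vSqSubfield κ ≤ Subfield.twistedCentralizer (RingHom.id M) (complexPolyHom κ (C Complex.I)) :=
  RingHom.fractionSubfield_le fun r => by
    rw [← C_comp (p := vSq)]
    exact ((Commute.all _ r).map (evalPhiVSq κ)).eq

variable {κ}

theorem complexPolyHom_vFactor_not_mem_vSqSubfield (hinj : Function.Injective κ) :
    complexPolyHom κ vFactor ∉ vSqSubfield κ := by
  rintro ⟨p, q, hq, h⟩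
  have hq0 : q ≠ 0 := by
    rintro rfl
    exact hq (map_zero _)
  rw [eq_div_iff hq, evalPhiVSq_apply, evalPhiVSq_apply, ← map_mul] at h
  exact vFactor_mul_comp_vSq_ne hq0 (complexPolyHom_injective hinj h)

end Embedding

namespace IsSigmaExtension

variable {κ : Polynomial (Quaternion ℝ) →+* M} {s : M →+* M} (hs : IsSigmaExtension κ s)
include hs

theorem map_apply (p : (ℍ[ℝ])[X]) : s (κ p) = κ (p.map qsigmaHom) := by
  rw [hs p, ← sum_C_apply_mul_X_pow_eq_map]
  rfl

theorem map_complexPolyHom (f : ℂ[X]) :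
    s (complexPolyHom κ f) = complexPolyHom κ (f.map conj) := by
  rw [complexPolyHom_apply, hs.map_apply, Polynomial.map_map, qsigmaHom_comp_qcHom,
    ← Polynomial.map_map, complexPolyHom_apply]

theorem map_jXElem : s (jXElem κ) = jXElem κ := by
  rw [jXElem, hs.map_apply]
  simp [qsigmaHom, qsigma_qj]

theorem phiV_add_map_phiV : phiV κ + s (phiV κ) = 2 * jXElem κ := by
  rw [phiV_eq, map_mul, hs.map_jXElem, hs.map_complexPolyHom, ← add_mul, ← map_add,
    vFactor_map_conj, vFactor, sub_add_add_cancel, one_add_one_eq_two, map_ofNat]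

theorem map_evalPhiVSq (f : ℂ[X]) : s (evalPhiVSq κ f) = evalPhiVSq κ (f.map conj) := by
  rw [evalPhiVSq_apply, hs.map_complexPolyHom, Polynomial.map_comp, vSq_map_conj,
    evalPhiVSq_apply]

theorem vSqSubfield_le_comap : vSqSubfield κ ≤ (vSqSubfield κ).comap s :=
  RingHom.fractionSubfield_le fun r => by
    rw [Subfield.mem_comap, hs.map_evalPhiVSq]
    exact RingHom.apply_mem_fractionSubfield _

theorem vSqSubfield_le_twistedCentralizer :
    vSqSubfield κ ≤ Subfield.twistedCentralizer s (phiV κ) :=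
  RingHom.fractionSubfield_le fun r => by
    show phiV κ * evalPhiVSq κ r = s (evalPhiVSq κ r) * phiV κ
    rw [hs.map_evalPhiVSq, evalPhiVSq_apply, phiV_mul_complexPolyHom, Polynomial.map_comp,
      vSq_map_conj, evalPhiVSq_apply]

theorem phiV_mul_mem_vSqSubfield :
    ∀ a ∈ vSqSubfield κ, ∃ b ∈ vSqSubfield κ, phiV κ * a = b * phiV κ := fun _ ha =>
  ⟨_, hs.vSqSubfield_le_comap ha, hs.vSqSubfield_le_twistedCentralizer ha⟩

theorem jXElem_not_mem_adjoinSkewSqrt (hinj : Function.Injective κ) :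
    jXElem κ ∉ (vSqSubfield κ).adjoinSkewSqrt (phiV κ) hs.phiV_mul_mem_vSqSubfield
      (phiV_mul_phiV_mem_vSqSubfield κ) := by
  rw [Subfield.mem_adjoinSkewSqrt]
  rintro ⟨a, ha, b, hb, hu⟩
  set i := complexPolyHom κ (C Complex.I)
  have hai : i * a = a * i := vSqSubfield_le_centralizer_I κ ha
  have hbi : i * b = b * i := vSqSubfield_le_centralizer_I κ hb
  have hconj : (C Complex.I).map conj = -C Complex.I := by simp
  have hvi : phiV κ * i = -(i * phiV κ) := by
    rw [phiV_mul_complexPolyHom, hconj, map_neg, neg_mul]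
  have hui : jXElem κ * i = -(i * jXElem κ) := by
    rw [jXElem_mul_complexPolyHom, hconj, map_neg, neg_mul]
  have ha0 : a = 0 := by
    have h2ai : 2 * (a * i) = 0 := by
      calc 2 * (a * i) = (a + b * phiV κ) * i + i * (a + b * phiV κ) := by
            rw [mul_add, ← mul_assoc i b, hbi, add_mul, mul_assoc b, hvi, hai]; noncomm_ring
        _ = 0 := by rw [← hu, hui, neg_add_cancel]
    have := charZero_of_injective hinj
    have hi : i ≠ 0 := (map_ne_zero_iff _ (complexPolyHom_injective hinj)).mpr
      (C_ne_zero.mpr Complex.I_ne_zero)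
    simpa [hi] using h2ai
  have hb1 : b * complexPolyHom κ vFactor = 1 := by
    refine mul_right_cancel₀ (jXElem_ne_zero hinj) ?_
    rw [mul_assoc, ← phiV_eq, one_mul, hu, ha0, zero_add]
  apply complexPolyHom_vFactor_not_mem_vSqSubfield hinj
  rw [eq_inv_of_mul_eq_one_right hb1]
  exact inv_mem hb

end IsSigmaExtension

theorem phi_closure_v_not_sigma_invariant_general
    (κ : Polynomial (Quaternion ℝ) →+* M) (hinj : Function.Injective κ)
    (s : M →+* M) (hs : IsSigmaExtension κ s) :
    s '' (Subfield.closure (complexSet κ ∪ {phiV κ}) : Set M) ≠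
      (Subfield.closure (complexSet κ ∪ {phiV κ}) : Set M) := by
  intro h
  set L := Subfield.closure (complexSet κ ∪ {phiV κ})
  have hv : phiV κ ∈ L := Subfield.subset_closure (Or.inr rfl)
  have hsv : s (phiV κ) ∈ L := by
    rw [← SetLike.mem_coe, ← h]
    exact Set.mem_image_of_mem s hv
  have := charZero_of_injective hinj
  have hu : jXElem κ ∈ L := by
    rw [← inv_mul_cancel_left₀ two_ne_zero (jXElem κ), ← hs.phiV_add_map_phiV]
    exact mul_mem (inv_mem (ofNat_mem L 2)) (add_mem hv hsv)
  refine hs.jXElem_not_mem_adjoinSkewSqrt hinj (Subfield.closure_le.mpr ?_ hu)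
  rintro _ (⟨z, rfl⟩ | rfl)
  · show κ (C (qc z)) ∈ _
    rw [← complexPolyHom_C]
    exact Subfield.le_adjoinSkewSqrt (complexPolyHom_C_mem_vSqSubfield κ z)
  · exact Subfield.mem_adjoinSkewSqrt_self

theorem phi_closure_v_not_sigma_invariant
    (κ : Polynomial (Quaternion ℝ) →+* M) (hinj : Function.Injective κ)
    (hquot : ∀ z : M, ∃ p q : Polynomial (Quaternion ℝ), q ≠ 0 ∧ z = κ p * (κ q)⁻¹)
    (s : M →+* M) (hs : IsSigmaExtension κ s) :
    s '' (Subfield.closure (complexSet κ ∪ {phiV κ}) : Set M) ≠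
      (Subfield.closure (complexSet κ ∪ {phiV κ}) : Set M) :=
  phi_closure_v_not_sigma_invariant_general κ hinj s hs
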